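/- arXiv:1906.01506 — 4 statements merged into one kernel-verified Lean document; each statement's English description precedes it below -/
import Mathlib

section
/- Every graph in the family 𝒥 is not 3-choosable. -/
/-- A graph `G` is `k`-choosable if for every assignment of lists of `k` colours to the
vertices there is a proper colouring choosing each vertex's colour from its list. -/
def Choosable {V : Type*} (G : SimpleGraph V) (k : ℕ) : Prop :=
  ∀ L : V → Finset ℕ, (∀ v, (L v).card = k) →
    ∃ φ : V → ℕ, (∀ v, φ v ∈ L v) ∧ ∀ ⦃u w : V⦄, G.Adj u w → φ u ≠ φ w

/-- The member of the family 𝒥 determined by `s : Fin 6 → Bool`: vertices are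
`a = Sum.inl 0`, `b = Sum.inl 1`, and `c i = Sum.inr (i,0)`, `d i = Sum.inr (i,1)`,
`e i = Sum.inr (i,2)` for `i : Fin 6`.  The edges are `ab` and, for each `i`,
`a-c i`, `b-c i`, `a-e i`, `b-e i`, `c i-d i`, `d i-e i`, together with `a-d i`
if `s i = true` (the copy is `J1`) and `b-d i` if `s i = false` (the copy is `J2`). -/
def Jfam (s : Fin 6 → Bool) : SimpleGraph (Sum (Fin 2) (Fin 6 × Fin 3)) :=
  SimpleGraph.fromRel (fun x y =>
    (x = Sum.inl 0 ∧ y = Sum.inl 1) ∨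
    ∃ i : Fin 6,
      (x = Sum.inl 0 ∧ y = Sum.inr (i, 0)) ∨
      (x = Sum.inl 1 ∧ y = Sum.inr (i, 0)) ∨
      (x = Sum.inl 0 ∧ y = Sum.inr (i, 2)) ∨
      (x = Sum.inl 1 ∧ y = Sum.inr (i, 2)) ∨
      (x = Sum.inr (i, 0) ∧ y = Sum.inr (i, 1)) ∨
      (x = Sum.inr (i, 1) ∧ y = Sum.inr (i, 2)) ∨
      (s i = true ∧ x = Sum.inl 0 ∧ y = Sum.inr (i, 1)) ∨
      (s i = false ∧ x = Sum.inl 1 ∧ y = Sum.inr (i, 1)))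

/-- The six ordered pairs of distinct colours from {1,2,3}. -/
def pr : Fin 6 → ℕ × ℕ
  | 0 => (1, 2)
  | 1 => (1, 3)
  | 2 => (2, 1)
  | 3 => (2, 3)
  | 4 => (3, 1)
  | 5 => (3, 2)

/-- The bad list assignment. -/
def badL (s : Fin 6 → Bool) : Sum (Fin 2) (Fin 6 × Fin 3) → Finset ℕ
  | Sum.inl _ => {1, 2, 3}
  | Sum.inr (i, j) =>
    match j with
    | 0 => {(pr i).1, (pr i).2, 4}
    | 1 => if s i then {4, 5, (pr i).1} else {4, 5, (pr i).2}
    | 2 => {(pr i).1, (pr i).2, 5}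

lemma badL_card (s : Fin 6 → Bool) (v : Sum (Fin 2) (Fin 6 × Fin 3)) :
    (badL s v).card = 3 := by
  rcases v with v | ⟨i, j⟩
  · rfl
  · cases hs : s i <;> fin_cases i <;> fin_cases j <;> simp_all [badL, pr]

section adj
variable (s : Fin 6 → Bool) (i : Fin 6)

lemma adj_ab : (Jfam s).Adj (Sum.inl 0) (Sum.inl 1) := by
  rw [Jfam, SimpleGraph.fromRel_adj]
  exact ⟨by simp, Or.inl (Or.inl ⟨rfl, rfl⟩)⟩

lemma adj_ac : (Jfam s).Adj (Sum.inl 0) (Sum.inr (i, 0)) := by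
  rw [Jfam, SimpleGraph.fromRel_adj]
  exact ⟨by simp, Or.inl (Or.inr ⟨i, Or.inl ⟨rfl, rfl⟩⟩)⟩

lemma adj_bc : (Jfam s).Adj (Sum.inl 1) (Sum.inr (i, 0)) := by
  rw [Jfam, SimpleGraph.fromRel_adj]
  exact ⟨by simp, Or.inl (Or.inr ⟨i, Or.inr (Or.inl ⟨rfl, rfl⟩)⟩)⟩

lemma adj_ae : (Jfam s).Adj (Sum.inl 0) (Sum.inr (i, 2)) := by
  rw [Jfam, SimpleGraph.fromRel_adj]
  exact ⟨by simp, Or.inl (Or.inr ⟨i, Or.inr (Or.inr (Or.inl ⟨rfl, rfl⟩))⟩)⟩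

lemma adj_be : (Jfam s).Adj (Sum.inl 1) (Sum.inr (i, 2)) := by
  rw [Jfam, SimpleGraph.fromRel_adj]
  exact ⟨by simp, Or.inl (Or.inr ⟨i, Or.inr (Or.inr (Or.inr (Or.inl ⟨rfl, rfl⟩)))⟩)⟩

lemma adj_cd : (Jfam s).Adj (Sum.inr (i, 0)) (Sum.inr (i, 1)) := by
  rw [Jfam, SimpleGraph.fromRel_adj]
  exact ⟨by simp, Or.inl (Or.inr ⟨i, Or.inr (Or.inr (Or.inr (Or.inr (Or.inl ⟨rfl, rfl⟩))))⟩)⟩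

lemma adj_de : (Jfam s).Adj (Sum.inr (i, 1)) (Sum.inr (i, 2)) := by
  rw [Jfam, SimpleGraph.fromRel_adj]
  exact ⟨by simp, Or.inl (Or.inr ⟨i,
    Or.inr (Or.inr (Or.inr (Or.inr (Or.inr (Or.inl ⟨rfl, rfl⟩)))))⟩)⟩

lemma adj_ad (h : s i = true) : (Jfam s).Adj (Sum.inl 0) (Sum.inr (i, 1)) := by
  rw [Jfam, SimpleGraph.fromRel_adj]
  exact ⟨by simp, Or.inl (Or.inr ⟨i,
    Or.inr (Or.inr (Or.inr (Or.inr (Or.inr (Or.inr (Or.inl ⟨h, rfl, rfl⟩))))))⟩)⟩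

lemma adj_bd (h : s i = false) : (Jfam s).Adj (Sum.inl 1) (Sum.inr (i, 1)) := by
  rw [Jfam, SimpleGraph.fromRel_adj]
  exact ⟨by simp, Or.inl (Or.inr ⟨i,
    Or.inr (Or.inr (Or.inr (Or.inr (Or.inr (Or.inr (Or.inr ⟨h, rfl, rfl⟩))))))⟩)⟩

end adj

lemma pr_surj {x y : ℕ} (hx : x ∈ ({1, 2, 3} : Finset ℕ)) (hy : y ∈ ({1, 2, 3} : Finset ℕ))
    (hxy : x ≠ y) : ∃ i : Fin 6, pr i = (x, y) := by
  fin_cases hx <;> fin_cases hy <;> simp_all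
  · exact ⟨0, rfl⟩
  · exact ⟨1, rfl⟩
  · exact ⟨2, rfl⟩
  · exact ⟨3, rfl⟩
  · exact ⟨4, rfl⟩
  · exact ⟨5, rfl⟩

/-- Every graph in the family 𝒥 is not 3-choosable. -/
theorem statement0 (s : Fin 6 → Bool) : ¬ Choosable (Jfam s) 3 := by
  intro h
  obtain ⟨φ, hmem, hadj⟩ := h (badL s) (badL_card s)
  have ha : φ (Sum.inl 0) ∈ ({1, 2, 3} : Finset ℕ) := hmem (Sum.inl 0)
  have hb : φ (Sum.inl 1) ∈ ({1, 2, 3} : Finset ℕ) := hmem (Sum.inl 1)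
  obtain ⟨i, hi⟩ := pr_surj ha hb (hadj (adj_ab s))
  have hc : φ (Sum.inr (i, 0)) ∈ ({(pr i).1, (pr i).2, 4} : Finset ℕ) := hmem (Sum.inr (i, 0))
  have he : φ (Sum.inr (i, 2)) ∈ ({(pr i).1, (pr i).2, 5} : Finset ℕ) := hmem (Sum.inr (i, 2))
  rw [hi] at hc he
  simp only [Finset.mem_insert, Finset.mem_singleton] at hc he
  have hc4 : φ (Sum.inr (i, 0)) = 4 := by
    rcases hc with h1 | h1 | h1
    · exact absurd h1.symm (hadj (adj_ac s i))
    · exact absurd h1.symm (hadj (adj_bc s i))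
    · exact h1
  have he5 : φ (Sum.inr (i, 2)) = 5 := by
    rcases he with h1 | h1 | h1
    · exact absurd h1.symm (hadj (adj_ae s i))
    · exact absurd h1.symm (hadj (adj_be s i))
    · exact h1
  have hd4 : φ (Sum.inr (i, 1)) ≠ 4 := fun h1 => hadj (adj_cd s i) (hc4.trans h1.symm)
  have hd5 : φ (Sum.inr (i, 1)) ≠ 5 := fun h1 => hadj (adj_de s i) (h1.trans he5.symm)
  have hd : φ (Sum.inr (i, 1)) ∈ badL s (Sum.inr (i, 1)) := hmem (Sum.inr (i, 1))
  cases hs : s i with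
  | true =>
      have : φ (Sum.inr (i, 1)) ∈ ({4, 5, (pr i).1} : Finset ℕ) := by
        simpa [badL, hs] using hd
      rw [hi] at this
      simp only [Finset.mem_insert, Finset.mem_singleton] at this
      rcases this with h1 | h1 | h1
      · exact hd4 h1
      · exact hd5 h1
      · exact hadj (adj_ad s i hs) h1.symm
  | false =>
      have : φ (Sum.inr (i, 1)) ∈ ({4, 5, (pr i).2} : Finset ℕ) := by
        simpa [badL, hs] using hd
      rw [hi] at this
      simp only [Finset.mem_insert, Finset.mem_singleton] at this
      rcases this with h1 | h1 | h1
      · exact hd4 h1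
      · exact hd5 h1
      · exact hadj (adj_bd s i hs) h1.symm
end

section
/- Let H be a subgraph of J3 with maximum degree at most 3 that contains no edge incident with a or with b. Then J3 − E(H) contains a subgraph isomorphic to K4, or a subgraph isomorphic to J1 or to J2 via an isomorphism mapping the handle ab of J1 (resp. J2) onto the edge ab of J3. -/
/-- The simple graph on `V` whose edges are the (symmetrized) pairs in the list `l`. -/
def graphOfList {V : Type*} (l : List (V × V)) : SimpleGraph V :=
  SimpleGraph.fromRel (fun x y => (x, y) ∈ l)

/-- The complete graph on four vertices. -/
def K4 : SimpleGraph (Fin 4) := ⊤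

/-- `G` contains a subgraph isomorphic to the pattern graph `P`. -/
def ContainsSub {W V : Type*} (P : SimpleGraph W) (G : SimpleGraph V) : Prop :=
  ∃ f : W ↪ V, ∀ ⦃a b : W⦄, P.Adj a b → G.Adj (f a) (f b)

/-- The graph `J1`, with vertices `a,b,c,d,e` encoded as `0,1,2,3,4` and edge set
`{ab, ac, bc, ae, be, cd, de, ad}`; the edge `ab` is its handle. -/
def J1 : SimpleGraph (Fin 5) :=
  graphOfList [(0,1), (0,2), (1,2), (0,4), (1,4), (2,3), (3,4), (0,3)]

/-- The graph `J2`: as `J1` but with the edge `ad` replaced by `bd`. -/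
def J2 : SimpleGraph (Fin 5) :=
  graphOfList [(0,1), (0,2), (1,2), (0,4), (1,4), (2,3), (3,4), (1,3)]

/-- The graph `J3`, with vertices `a,…,k` encoded as `0,…,10`: edge `ab`; `a` and `b`
adjacent to all of `c,d,e,f,g`; path edges `cd, de, ef, fg`; `h` adjacent to `a,d,e`;
`i` adjacent to `a,e,f`; `j` adjacent to `b,d,e`; `k` adjacent to `b,e,f`. -/
def J3 : SimpleGraph (Fin 11) :=
  graphOfList [(0,1),
    (0,2), (0,3), (0,4), (0,5), (0,6),
    (1,2), (1,3), (1,4), (1,5), (1,6),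
    (2,3), (3,4), (4,5), (5,6),
    (7,0), (7,3), (7,4),
    (8,0), (8,4), (8,5),
    (9,1), (9,3), (9,4),
    (10,1), (10,4), (10,5)]

/-
If an edge `xy` of the path `c d e f g` survives in `J3 − E(H)`, then `a, b, x, y` span a `K4`,
since `a` and `b` are joined to the whole path and `H` avoids them. Otherwise the whole path lies
in `H`, so `e` has room for at most one more `H`-neighbour among `h, i, j, k`: either `eh, ej`
or `ei, ek` survive. In the first case the handle `ab` together with `d, e` and one of `h, j`
carries a copy of `J1` or `J2`, because `d` cannot lose both `dh` and `dj`; the second case is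
its mirror image at `f`.
-/

instance {V : Type*} [DecidableEq V] (l : List (V × V)) : DecidableRel (graphOfList l).Adj :=
  fun x y => decidable_of_iff (x ≠ y ∧ ((x, y) ∈ l ∨ (y, x) ∈ l)) (by simp [graphOfList])

instance : DecidableRel J3.Adj := inferInstanceAs (DecidableRel (graphOfList _).Adj)

theorem graphOfList_adj_map {V W : Type*} {l : List (V × V)} {G : SimpleGraph W} {f : V → W}
    (h : ∀ p ∈ l, G.Adj (f p.1) (f p.2)) {x y : V} (hxy : (graphOfList l).Adj x y) :
    G.Adj (f x) (f y) := by
  obtain ⟨-, hl | hl⟩ := SimpleGraph.fromRel_adj _ x y |>.mp hxy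
  · exact h _ hl
  · exact (h _ hl).symm

theorem SimpleGraph.eq_of_adj_of_ncard_neighborSet_le_three {V : Type*} [Finite V]
    {G : SimpleGraph V} {v x y z w : V} (hdeg : (G.neighborSet v).ncard ≤ 3)
    (hx : G.Adj v x) (hy : G.Adj v y) (hz : G.Adj v z) (hw : G.Adj v w)
    (hxy : x ≠ y) (hzx : z ≠ x) (hzy : z ≠ y) (hwx : w ≠ x) (hwy : w ≠ y) : w = z := by
  have hsub : {x, y, z} ⊆ G.neighborSet v := by
    simp [Set.insert_subset_iff, hx, hy, hz]
  have hcard : ({x, y, z} : Set V).ncard = 3 :=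
    Set.ncard_eq_three.mpr ⟨x, y, z, hxy, hzx.symm, hzy.symm, rfl⟩
  have hw' : w ∈ ({x, y, z} : Set V) :=
    Set.eq_of_subset_of_ncard_le hsub (hcard ▸ hdeg) ▸ hw
  simpa [hwx, hwy] using hw'

theorem containsSub_iff_isContained {V W : Type*} {P : SimpleGraph W} {G : SimpleGraph V} :
    ContainsSub P G ↔ P.IsContained G :=
  SimpleGraph.isContained_iff_exists_le_comap.symm

theorem containsSub_K4_of_adj {V : Type*} {G : SimpleGraph V} {a b c d : V}
    (hab : G.Adj a b) (hac : G.Adj a c) (had : G.Adj a d) (hbc : G.Adj b c) (hbd : G.Adj b d)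
    (hcd : G.Adj c d) : ContainsSub K4 G := by
  classical
  have h : G.IsNClique 4 {a, b, c, d} :=
    (SimpleGraph.is3Clique_triple_iff.mpr ⟨hbc, hbd, hcd⟩).insert (by simp [hab, hac, had])
  exact containsSub_iff_isContained.mpr ((G.not_cliqueFree_iff_top_isContained 4).mp h.not_cliqueFree)

def ContainsJ1OrJ2AtHandle (G : SimpleGraph (Fin 11)) : Prop :=
  ∃ f : Fin 5 ↪ Fin 11, f 0 = 0 ∧ f 1 = 1 ∧
    ((∀ x y, J1.Adj x y → G.Adj (f x) (f y)) ∨ (∀ x y, J2.Adj x y → G.Adj (f x) (f y)))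

section Remainder

variable {H : SimpleGraph (Fin 11)} (hA : ∀ v, ¬ H.Adj 0 v) (hB : ∀ v, ¬ H.Adj 1 v)
include hA hB

theorem containsSub_K4_of_not_adj {x y : Fin 11} (h0x : J3.Adj 0 x) (h1x : J3.Adj 1 x)
    (h0y : J3.Adj 0 y) (h1y : J3.Adj 1 y) (hxy : J3.Adj x y) (hH : ¬ H.Adj x y) :
    ContainsSub K4 (J3 \ H) :=
  containsSub_K4_of_adj ⟨by decide, hA 1⟩ ⟨h0x, hA x⟩ ⟨h0y, hA y⟩ ⟨h1x, hB x⟩ ⟨h1y, hB y⟩ ⟨hxy, hH⟩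

theorem containsJ1OrJ2AtHandle_through_d (hdeg : (H.neighborSet 3).ncard ≤ 3) (h32 : H.Adj 3 2)
    (h34 : H.Adj 3 4) (h47 : ¬ H.Adj 4 7) (h49 : ¬ H.Adj 4 9) :
    ContainsJ1OrJ2AtHandle (J3 \ H) := by
  by_cases h37 : H.Adj 3 7
  · have h39 : ¬ H.Adj 3 9 := fun h39 => absurd
      (H.eq_of_adj_of_ncard_neighborSet_le_three hdeg h32 h34 h37 h39 (by decide) (by decide)
        (by decide) (by decide) (by decide)) (by decide)
    refine ⟨⟨![0, 1, 3, 9, 4], by decide⟩, rfl, rfl, .inr fun x y => graphOfList_adj_map ?_⟩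
    simp +decide [hA, hB, h39, h49, H.adj_comm]
  · refine ⟨⟨![0, 1, 3, 7, 4], by decide⟩, rfl, rfl, .inl fun x y => graphOfList_adj_map ?_⟩
    simp +decide [hA, hB, h37, h47, H.adj_comm]

/- The mirror image under the automorphism `c ↔ g, d ↔ f, h ↔ i, j ↔ k` of `J3`. -/
theorem containsJ1OrJ2AtHandle_through_f (hdeg : (H.neighborSet 5).ncard ≤ 3) (h56 : H.Adj 5 6)
    (h54 : H.Adj 5 4) (h48 : ¬ H.Adj 4 8) (h410 : ¬ H.Adj 4 10) :
    ContainsJ1OrJ2AtHandle (J3 \ H) := by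
  by_cases h58 : H.Adj 5 8
  · have h510 : ¬ H.Adj 5 10 := fun h510 => absurd
      (H.eq_of_adj_of_ncard_neighborSet_le_three hdeg h56 h54 h58 h510 (by decide) (by decide)
        (by decide) (by decide) (by decide)) (by decide)
    refine ⟨⟨![0, 1, 5, 10, 4], by decide⟩, rfl, rfl, .inr fun x y => graphOfList_adj_map ?_⟩
    simp +decide [hA, hB, h510, h410, H.adj_comm]
  · refine ⟨⟨![0, 1, 5, 8, 4], by decide⟩, rfl, rfl, .inl fun x y => graphOfList_adj_map ?_⟩
    simp +decide [hA, hB, h58, h48, H.adj_comm]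

end Remainder

theorem statement1_general (H : SimpleGraph (Fin 11))
    (hdeg : ∀ v, (H.neighborSet v).ncard ≤ 3)
    (hA : ∀ v, ¬ H.Adj 0 v) (hB : ∀ v, ¬ H.Adj 1 v) :
    ContainsSub K4 (J3 \ H) ∨
      ∃ f : Fin 5 ↪ Fin 11, ((f 0 = 0 ∧ f 1 = 1) ∨ (f 0 = 1 ∧ f 1 = 0)) ∧
        ((∀ a b : Fin 5, J1.Adj a b → (J3 \ H).Adj (f a) (f b)) ∨
         (∀ a b : Fin 5, J2.Adj a b → (J3 \ H).Adj (f a) (f b))) := by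
  by_cases hpath : H.Adj 2 3 ∧ H.Adj 3 4 ∧ H.Adj 4 5 ∧ H.Adj 5 6
  swap
  · simp only [not_and_or] at hpath
    left
    rcases hpath with h | h | h | h <;>
      exact containsSub_K4_of_not_adj hA hB (by decide) (by decide) (by decide) (by decide)
        (by decide) h
  obtain ⟨h23, h34, h45, h56⟩ := hpath
  suffices ContainsJ1OrJ2AtHandle (J3 \ H) by
    obtain ⟨f, h0, h1, hf⟩ := this
    exact .inr ⟨f, .inl ⟨h0, h1⟩, hf⟩
  by_cases hhj : H.Adj 4 7 ∨ H.Adj 4 9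
  · have hik : ¬ H.Adj 4 8 ∧ ¬ H.Adj 4 10 := by
      constructor <;> intro h' <;> rcases hhj with h | h <;>
        exact absurd (H.eq_of_adj_of_ncard_neighborSet_le_three (hdeg 4) h34.symm h45 h h'
          (by decide) (by decide) (by decide) (by decide) (by decide)) (by decide)
    exact containsJ1OrJ2AtHandle_through_f hA hB (hdeg 5) h56 h45.symm hik.1 hik.2
  · rw [not_or] at hhj
    exact containsJ1OrJ2AtHandle_through_d hA hB (hdeg 3) h23.symm h34 hhj.1 hhj.2

/-- If `H` is a subgraph of `J3` of maximum degree at most 3 containing no edge incident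
with `a` or with `b`, then `J3 − E(H)` contains a copy of `K4`, or a copy of `J1` or `J2`
whose handle is mapped onto the edge `ab` of `J3`. -/
theorem statement1 (H : SimpleGraph (Fin 11)) (hle : H ≤ J3)
    (hdeg : ∀ v, (H.neighborSet v).ncard ≤ 3)
    (hA : ∀ v, ¬ H.Adj 0 v) (hB : ∀ v, ¬ H.Adj 1 v) :
    ContainsSub K4 (J3 \ H) ∨
      ∃ f : Fin 5 ↪ Fin 11, ((f 0 = 0 ∧ f 1 = 1) ∨ (f 0 = 1 ∧ f 1 = 0)) ∧
        ((∀ a b : Fin 5, J1.Adj a b → (J3 \ H).Adj (f a) (f b)) ∨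
         (∀ a b : Fin 5, J2.Adj a b → (J3 \ H).Adj (f a) (f b))) :=
  statement1_general H hdeg hA hB
end

section
/- Let H be a subgraph of S with maximum degree at most 3 that contains no edge incident with a. Then S − E(H) contains a subgraph isomorphic to K4 or a subgraph isomorphic to a member of 𝒥. -/
/-- The map placing the `t`-th copy of `J3` into `S`: the handle vertices `a = 0` and
`b = 1` of `J3` go to the common handle vertices `Sum.inl 0` and `Sum.inl 1`, and the
remaining nine vertices of the copy go to `Sum.inr (t, ·)`. -/
def mp (t : Fin 9) (m : Fin 11) : Sum (Fin 2) (Fin 9 × Fin 9) :=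
  if m.val = 0 then Sum.inl 0
  else if m.val = 1 then Sum.inl 1
  else Sum.inr (t, ⟨m.val - 2, by have := m.isLt; omega⟩)

/-- The graph `S`, obtained from nine copies of `J3` by identifying the nine edges
corresponding to `ab` into the single edge joining `Sum.inl 0` and `Sum.inl 1`. -/
def S : SimpleGraph (Sum (Fin 2) (Fin 9 × Fin 9)) :=
  SimpleGraph.fromRel (fun x y =>
    ∃ t : Fin 9, ∃ p q : Fin 11, J3.Adj p q ∧ x = mp t p ∧ y = mp t q)


/-!
Since `b` has at most three `H`-neighbours, at least six of the nine copies of `J3` contain no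
`H`-edge at `a` or `b`. In such a copy, if an edge of the path `c d e f g` survives, it spans a
`K4` together with `a` and `b`. Otherwise `d`, `e`, `f` already have two `H`-edges each, so the
degree bound allows at most one more `H`-edge at each of them; this cannot block all four paths
`d h e`, `d j e`, `e i f`, `e k f`, and a surviving one spans a copy of `J1` or `J2` on the
handle. Six such copies form a member of 𝒥.
-/

open SimpleGraph Function

section ContainsSub

variable {U V W : Type*} {P : SimpleGraph U} {G : SimpleGraph V} {G' : SimpleGraph W}

theorem ContainsSub.map (h : ContainsSub P G) (f : G →g G') (hf : Injective f) :
    ContainsSub P G' := by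
  obtain ⟨e, he⟩ := h
  exact ⟨e.trans ⟨f, hf⟩, fun _ _ hab => f.map_adj (he hab)⟩

theorem containsSub_top_of_pairwise_adj (f : U → V) (hf : Pairwise fun i j => G.Adj (f i) (f j)) :
    ContainsSub (⊤ : SimpleGraph U) G :=
  ⟨⟨f, fun _ _ hij => by_contra fun hne => (hf hne).ne hij⟩, fun _ _ hij => hf hij⟩

theorem containsSub_K4_of_adj_s2 {v₀ v₁ v₂ v₃ : V} (h₀₁ : G.Adj v₀ v₁) (h₀₂ : G.Adj v₀ v₂)
    (h₀₃ : G.Adj v₀ v₃) (h₁₂ : G.Adj v₁ v₂) (h₁₃ : G.Adj v₁ v₃) (h₂₃ : G.Adj v₂ v₃) :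
    ContainsSub K4 G := by
  refine containsSub_top_of_pairwise_adj ![v₀, v₁, v₂, v₃] fun i j hij => ?_
  fin_cases i <;> fin_cases j <;>
    first | exact absurd rfl hij | assumption | exact Adj.symm ‹_›

end ContainsSub

section Degree

variable {V W : Type*} [Finite W] {G : SimpleGraph V}

theorem length_le_ncard_neighborSet [Finite V] {v : V} {l : List V} (hl : l.Nodup)
    (hadj : ∀ w ∈ l, G.Adj v w) : l.length ≤ (G.neighborSet v).ncard := by
  classical
  rw [← List.toFinset_card_of_nodup hl, ← Set.ncard_coe_finset]
  exact Set.ncard_le_ncard fun w hw => hadj w (by simpa using hw)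

theorem ncard_preimage_le_of_injective {f : V → W} (hf : Injective f) (s : Set W) :
    (f ⁻¹' s).ncard ≤ s.ncard :=
  Set.ncard_le_ncard_of_injOn f (fun _ hx => hx) hf.injOn

end Degree

section Gadget

variable {V W : Type*} {G : SimpleGraph V} {G' : SimpleGraph W}

/-- `c 0, c 1, c 2` play the roles of `c, d, e` of `J1` (`s = true`, `d` joined to `a`)
or of `J2` (`s = false`, `d` joined to `b`), with handle `a b`. -/
structure IsJGadget (G : SimpleGraph V) (a b : V) (s : Bool) (c : Fin 3 → V) : Prop where
  adj_ac : G.Adj a (c 0)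
  adj_bc : G.Adj b (c 0)
  adj_ae : G.Adj a (c 2)
  adj_be : G.Adj b (c 2)
  adj_cd : G.Adj (c 0) (c 1)
  adj_de : G.Adj (c 1) (c 2)
  adj_handle_d : G.Adj (cond s a b) (c 1)

theorem IsJGadget.map {a b : V} {s : Bool} {c : Fin 3 → V} (h : IsJGadget G a b s c)
    (f : G →g G') : IsJGadget G' (f a) (f b) s (f ∘ c) where
  adj_ac := f.map_adj h.adj_ac
  adj_bc := f.map_adj h.adj_bc
  adj_ae := f.map_adj h.adj_ae
  adj_be := f.map_adj h.adj_be
  adj_cd := f.map_adj h.adj_cd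
  adj_de := f.map_adj h.adj_de
  adj_handle_d := by cases s <;> exact f.map_adj h.adj_handle_d

theorem IsJGadget.sdiff {H : SimpleGraph V} {a b : V} {s : Bool} {c : Fin 3 → V}
    (h : IsJGadget G a b s c) (ha : ∀ v, ¬ H.Adj a v) (hb : ∀ v, ¬ H.Adj b v)
    (hcd : ¬ H.Adj (c 0) (c 1)) (hde : ¬ H.Adj (c 1) (c 2)) : IsJGadget (G \ H) a b s c where
  adj_ac := ⟨h.adj_ac, ha _⟩
  adj_bc := ⟨h.adj_bc, hb _⟩
  adj_ae := ⟨h.adj_ae, ha _⟩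
  adj_be := ⟨h.adj_be, hb _⟩
  adj_cd := ⟨h.adj_cd, hcd⟩
  adj_de := ⟨h.adj_de, hde⟩
  adj_handle_d := ⟨h.adj_handle_d, by cases s; exacts [hb _, ha _]⟩

theorem containsSub_Jfam {a b : V} (hab : G.Adj a b) (s : Fin 6 → Bool) (c : Fin 6 → Fin 3 → V)
    (hc : Injective (uncurry c)) (hca : ∀ i k, c i k ≠ a) (hcb : ∀ i k, c i k ≠ b)
    (hgad : ∀ i, IsJGadget G a b (s i) (c i)) : ContainsSub (Jfam s) G := by
  have hhandle : Injective ![a, b] := by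
    intro i j; fin_cases i <;> fin_cases j <;> simp [hab.ne, hab.ne.symm]
  have hinj : Injective (Sum.elim ![a, b] (uncurry c)) := by
    refine hhandle.sumElim hc fun h ⟨i, k⟩ => ?_
    fin_cases h
    exacts [(hca i k).symm, (hcb i k).symm]
  refine ⟨⟨_, hinj⟩, ?_⟩
  rintro x y ⟨-, hxy | hxy⟩ <;> [skip; apply Adj.symm] <;>
    rcases hxy with ⟨rfl, rfl⟩ | ⟨i, ⟨rfl, rfl⟩ | ⟨rfl, rfl⟩ | ⟨rfl, rfl⟩ | ⟨rfl, rfl⟩ |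
      ⟨rfl, rfl⟩ | ⟨rfl, rfl⟩ | ⟨hs, rfl, rfl⟩ | ⟨hs, rfl, rfl⟩⟩
  all_goals first
    | exact hab | exact (hgad i).adj_ac | exact (hgad i).adj_bc | exact (hgad i).adj_ae
    | exact (hgad i).adj_be | exact (hgad i).adj_cd | exact (hgad i).adj_de
    | simpa [hs] using (hgad i).adj_handle_d

end Gadget

section J3

instance inst_s2 : DecidableRel J3.Adj := fun p q =>
  decidable_of_iff _ (fromRel_adj _ p q).symm

variable {H : SimpleGraph (Fin 11)}

theorem J3_sdiff_containsSub_K4 (ha : ∀ v, ¬ H.Adj 0 v) (hb : ∀ v, ¬ H.Adj 1 v) {p : Fin 11}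
    (hp : p ∈ [2, 3, 4, 5]) (hpath : ¬ H.Adj p (p + 1)) : ContainsSub K4 (J3 \ H) := by
  have hJ : ∀ p ∈ [2, 3, 4, 5], J3.Adj 0 1 ∧ J3.Adj 0 p ∧ J3.Adj 0 (p + 1) ∧ J3.Adj 1 p ∧
      J3.Adj 1 (p + 1) ∧ J3.Adj p (p + 1) := by
    decide
  obtain ⟨h₀₁, h₀₂, h₀₃, h₁₂, h₁₃, h₂₃⟩ := hJ p hp
  exact containsSub_K4_of_adj_s2 ⟨h₀₁, ha _⟩ ⟨h₀₂, ha _⟩ ⟨h₀₃, ha _⟩ ⟨h₁₂, hb _⟩ ⟨h₁₃, hb _⟩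
    ⟨h₂₃, hpath⟩

theorem exists_detour_not_adj_of_path_adj (hdeg : ∀ v, (H.neighborSet v).ncard ≤ 3)
    (hcd : H.Adj 2 3) (hde : H.Adj 3 4) (hef : H.Adj 4 5) (hfg : H.Adj 5 6) :
    (¬ H.Adj 3 7 ∧ ¬ H.Adj 7 4) ∨ (¬ H.Adj 3 9 ∧ ¬ H.Adj 9 4) ∨
      (¬ H.Adj 4 8 ∧ ¬ H.Adj 8 5) ∨ (¬ H.Adj 4 10 ∧ ¬ H.Adj 10 5) := by
  have four_adj : ∀ {v w₁ w₂ w₃ w₄ : Fin 11}, [w₁, w₂, w₃, w₄].Nodup → H.Adj v w₁ →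
      H.Adj v w₂ → H.Adj v w₃ → H.Adj v w₄ → False := fun {v _ _ _ _} hl h₁ h₂ h₃ h₄ => by
    have := (length_le_ncard_neighborSet (v := v) hl (by simp [h₁, h₂, h₃, h₄])).trans (hdeg v)
    simp at this
  by_contra hblocked
  simp only [not_or, not_and_or, not_not] at hblocked
  obtain ⟨hdhe, hdje, heif, hekf⟩ := hblocked
  have heh_ej : H.Adj 4 7 ∨ H.Adj 4 9 := by
    rcases hdhe with hdh | hhe
    · rcases hdje with hdj | hje
      · exact (four_adj (by decide) hcd.symm hde hdh hdj).elim
      · exact Or.inr hje.symm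
    · exact Or.inl hhe.symm
  have hei_ek : H.Adj 4 8 ∨ H.Adj 4 10 := by
    rcases heif with hei | hif
    · exact Or.inl hei
    · rcases hekf with hek | hkf
      · exact Or.inr hek
      · exact (four_adj (by decide) hef.symm hfg hif.symm hkf.symm).elim
  rcases heh_ej with h₁ | h₁ <;> rcases hei_ek with h₂ | h₂ <;>
    exact four_adj (by decide) hde.symm hef h₁ h₂

theorem J3_sdiff_containsSub_K4_or_isJGadget (hdeg : ∀ v, (H.neighborSet v).ncard ≤ 3)
    (ha : ∀ v, ¬ H.Adj 0 v) (hb : ∀ v, ¬ H.Adj 1 v) :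
    ContainsSub K4 (J3 \ H) ∨ ∃ (s : Bool) (c : Fin 3 → Fin 11),
      Injective c ∧ (∀ k, 2 ≤ (c k).val) ∧ IsJGadget (J3 \ H) 0 1 s c := by
  by_cases hK : ∃ p ∈ [2, 3, 4, 5], ¬ H.Adj p (p + 1)
  · obtain ⟨p, hp, hpath⟩ := hK
    exact Or.inl (J3_sdiff_containsSub_K4 ha hb hp hpath)
  push Not at hK
  have gadget : ∀ (s : Bool) (c : Fin 3 → Fin 11), Injective c → (∀ k, 2 ≤ (c k).val) →
      IsJGadget J3 0 1 s c → ¬ H.Adj (c 0) (c 1) ∧ ¬ H.Adj (c 1) (c 2) →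
      ∃ (s : Bool) (c : Fin 3 → Fin 11),
        Injective c ∧ (∀ k, 2 ≤ (c k).val) ∧ IsJGadget (J3 \ H) 0 1 s c :=
    fun s c hc hc2 hJ hH => ⟨s, c, hc, hc2, hJ.sdiff ha hb hH.1 hH.2⟩
  right
  rcases exists_detour_not_adj_of_path_adj hdeg (hK 2 (by simp)) (hK 3 (by simp)) (hK 4 (by simp))
    (hK 5 (by simp)) with h | h | h | h
  · exact gadget true ![3, 7, 4] (by decide) (by decide) (by constructor <;> decide) h
  · exact gadget false ![3, 9, 4] (by decide) (by decide) (by constructor <;> decide) h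
  · exact gadget true ![4, 8, 5] (by decide) (by decide) (by constructor <;> decide) h
  · exact gadget false ![4, 10, 5] (by decide) (by decide) (by constructor <;> decide) h

end J3

section S

theorem mp_injective (t : Fin 9) : Injective (mp t) := by
  revert t; decide

theorem mp_of_two_le {t : Fin 9} {p : Fin 11} (hp : 2 ≤ p.val) :
    mp t p = .inr (t, ⟨p.val - 2, by omega⟩) := by
  unfold mp
  rw [if_neg (by omega), if_neg (by omega)]

theorem S_adj_mp (t : Fin 9) {p q : Fin 11} (h : J3.Adj p q) : S.Adj (mp t p) (mp t q) :=
  ⟨fun he => h.ne (mp_injective t he), Or.inl ⟨t, p, q, h, rfl, rfl⟩⟩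

theorem injective_uncurry_mp_comp (g : Fin 6 ↪ Fin 9) {c : Fin 6 → Fin 3 → Fin 11}
    (hc : ∀ i, Injective (c i)) (hc2 : ∀ i k, 2 ≤ (c i k).val) :
    Injective (uncurry fun i => mp (g i) ∘ c i) := by
  rintro ⟨i, k⟩ ⟨j, l⟩ h
  simp only [uncurry_apply_pair, comp_apply, mp_of_two_le (hc2 _ _), Sum.inr.injEq,
    Prod.mk.injEq, Fin.mk.injEq] at h
  obtain rfl := g.injective h.1
  have := hc2 i k
  have := hc2 i l
  rw [hc i (Fin.ext (by omega) : c i k = c i l)]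

variable (H : SimpleGraph (Fin 2 ⊕ Fin 9 × Fin 9))

def copyHom (t : Fin 9) : J3 \ H.comap (mp t) →g S \ H where
  toFun := mp t
  map_rel' := fun ⟨hJ, hH⟩ => ⟨S_adj_mp t hJ, hH⟩

theorem S_sdiff_containsSub_K4_or_isJGadget (hdeg : ∀ v, (H.neighborSet v).ncard ≤ 3)
    (hA : ∀ v, ¬ H.Adj (.inl 0) v) (t : Fin 9) (hB : ∀ p, ¬ H.Adj (.inl 1) (mp t p)) :
    ContainsSub K4 (S \ H) ∨ ∃ (s : Bool) (c : Fin 3 → Fin 11),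
      Injective c ∧ (∀ k, 2 ≤ (c k).val) ∧ IsJGadget (S \ H) (.inl 0) (.inl 1) s (mp t ∘ c) := by
  have hdeg' : ∀ v, ((H.comap (mp t)).neighborSet v).ncard ≤ 3 := fun v =>
    (ncard_preimage_le_of_injective (mp_injective t) _).trans (hdeg _)
  rcases J3_sdiff_containsSub_K4_or_isJGadget hdeg' (fun _ => hA _) hB with
    hK | ⟨s, c, hc, hc2, hgad⟩
  · exact Or.inl (hK.map (copyHom H t) (mp_injective t))
  · exact Or.inr ⟨s, c, hc, hc2, hgad.map (copyHom H t)⟩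

theorem exists_embedding_forall_not_adj_mp (hdeg : (H.neighborSet (.inl 1)).ncard ≤ 3)
    (hba : ¬ H.Adj (.inl 1) (.inl 0)) :
    ∃ g : Fin 6 ↪ Fin 9, ∀ i p, ¬ H.Adj (.inl 1) (mp (g i) p) := by
  classical
  set touched : Set (Fin 9) := Prod.fst '' (Sum.inr ⁻¹' H.neighborSet (.inl 1))
  have htouched : touched.ncard ≤ 3 :=
    (Set.ncard_image_le (Set.toFinite _)).trans
      ((ncard_preimage_le_of_injective Sum.inr_injective _).trans hdeg)
  have huntouched : 6 ≤ touchedᶜ.toFinset.card := by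
    rw [← Set.ncard_coe_finset, Set.coe_toFinset, Set.ncard_compl, Nat.card_eq_fintype_card,
      Fintype.card_fin]
    omega
  obtain ⟨T, hT, hTcard⟩ := Finset.exists_subset_card_eq huntouched
  refine ⟨(T.orderEmbOfFin hTcard).toEmbedding, fun i p hadj => ?_⟩
  have hi : T.orderEmbOfFin hTcard i ∉ touched := by
    simpa using hT (T.orderEmbOfFin_mem hTcard i)
  rcases p with ⟨_ | _ | m, hp⟩
  · exact hba hadj
  · exact hadj.ne rfl
  · rw [mp_of_two_le (by simp)] at hadj
    exact hi ⟨_, hadj, rfl⟩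

end S

theorem statement2_general (H : SimpleGraph (Sum (Fin 2) (Fin 9 × Fin 9)))
    (hdeg : ∀ v, (H.neighborSet v).ncard ≤ 3)
    (hA : ∀ v, ¬ H.Adj (Sum.inl 0) v) :
    ContainsSub K4 (S \ H) ∨ ∃ s : Fin 6 → Bool, ContainsSub (Jfam s) (S \ H) := by
  obtain ⟨g, hg⟩ := exists_embedding_forall_not_adj_mp H (hdeg _) (fun h => hA _ h.symm)
  by_cases hK : ContainsSub K4 (S \ H)
  · exact Or.inl hK
  choose s c hc hc2 hgad using fun i =>
    (S_sdiff_containsSub_K4_or_isJGadget H hdeg hA (g i) (hg i)).resolve_left hK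
  have hab : (S \ H).Adj (.inl 0) (.inl 1) := ⟨S_adj_mp 0 (p := 0) (q := 1) (by decide), hA _⟩
  refine Or.inr ⟨s, containsSub_Jfam hab s _ ?_ ?_ ?_ hgad⟩
  · exact injective_uncurry_mp_comp g hc hc2
  all_goals intro i k; simp [mp_of_two_le (hc2 i k)]

/-- If `H` is a subgraph of `S` of maximum degree at most 3 containing no edge incident
with `a`, then `S − E(H)` contains a copy of `K4` or a copy of a member of 𝒥. -/
theorem statement2 (H : SimpleGraph (Sum (Fin 2) (Fin 9 × Fin 9))) (hle : H ≤ S)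
    (hdeg : ∀ v, (H.neighborSet v).ncard ≤ 3)
    (hA : ∀ v, ¬ H.Adj (Sum.inl 0) v) :
    ContainsSub K4 (S \ H) ∨ ∃ s : Fin 6 → Bool, ContainsSub (Jfam s) (S \ H) :=
  statement2_general H hdeg hA
end

section
/- Let D be a finite digraph whose arc set is partitioned into two sets A1 and A2 such that the only vertices incident both with an arc of A1 and with an arc of A2 are two vertices u and v, and such that no arc of A2 has tail u or tail v (i.e., u and v have out-degree 0 in A2). Let D1 and D2 be the spanning sub-digraphs of D with arc sets A1 and A2 respectively. Then |EE(D)| − |OE(D)| = (|EE(D1)| − |OE(D1)|) · (|EE(D2)| − |OE(D2)|). -/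
/-- `H` is a spanning Eulerian sub-digraph of the digraph with arc set `A`: a subset of
the arcs in which every vertex has equal in-degree and out-degree. -/
def IsEulerianSub {V : Type*} [DecidableEq V] (A H : Finset (V × V)) : Prop :=
  H ⊆ A ∧ ∀ v : V, (H.filter fun p => p.1 = v).card = (H.filter fun p => p.2 = v).card

/-- The set of spanning Eulerian sub-digraphs of the digraph with arc set `A` having an
even number of arcs. -/
def EE {V : Type*} [DecidableEq V] [Fintype V] (A : Finset (V × V)) :
    Finset (Finset (V × V)) :=
  A.powerset.filter fun H =>
    (∀ v : V, (H.filter fun p => p.1 = v).card = (H.filter fun p => p.2 = v).card) ∧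
      Even H.card

/-- The set of spanning Eulerian sub-digraphs of the digraph with arc set `A` having an
odd number of arcs. -/
def OE {V : Type*} [DecidableEq V] [Fintype V] (A : Finset (V × V)) :
    Finset (Finset (V × V)) :=
  A.powerset.filter fun H =>
    (∀ v : V, (H.filter fun p => p.1 = v).card = (H.filter fun p => p.2 = v).card) ∧
      Odd H.card

/-!
Write `|EE(A)| - |OE(A)|` as `∑ H ⊆ A, [H balanced] (-1)^|H|`. Every `H ⊆ A1 ∪ A2` is uniquely
`H1 ∪ H2` with `Hi ⊆ Ai`, so it suffices that the summand is multiplicative, i.e. that a balanced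
`H1 ∪ H2` has balanced parts. In `H2` every vertex other than `u, v` is balanced, since it meets
arcs of only one side, and `u, v` have out-degree `0 ≤` in-degree; as in- and out-degrees of `H2`
have the same total, equality holds everywhere, and then `H1` is balanced too.
-/

open Finset

lemma Finset.sum_powerset_union {α M : Type*} [DecidableEq α] [AddCommMonoid M]
    {s t : Finset α} (hst : Disjoint s t) (f : Finset α → M) :
    ∑ H ∈ (s ∪ t).powerset, f H = ∑ H₁ ∈ s.powerset, ∑ H₂ ∈ t.powerset, f (H₁ ∪ H₂) := by
  have hsplit : ∀ H ∈ (s ∪ t).powerset, H ∩ s ∪ H ∩ t = H := fun H hH => by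
    rw [← inter_union_distrib_left, inter_eq_left.2 (mem_powerset.1 hH)]
  rw [← sum_product']
  refine sum_nbij' (fun H => (H ∩ s, H ∩ t)) (fun p => p.1 ∪ p.2) ?_ ?_ hsplit ?_
    fun H hH => by rw [hsplit H hH]
  · simp
  · simp only [mem_product, mem_powerset]
    exact fun p hp => union_subset_union hp.1 hp.2
  · rintro ⟨H₁, H₂⟩ h
    simp only [mem_product, mem_powerset] at h
    simp [union_inter_distrib_right, inter_eq_left.2 h.1, inter_eq_left.2 h.2,
      disjoint_iff_inter_eq_empty.1 (hst.mono_left h.1),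
      disjoint_iff_inter_eq_empty.1 (hst.symm.mono_left h.2)]

section ArcSets

variable {V : Type*} [DecidableEq V]

def outDeg (H : Finset (V × V)) (w : V) : ℕ := #{p ∈ H | p.1 = w}

def inDeg (H : Finset (V × V)) (w : V) : ℕ := #{p ∈ H | p.2 = w}

def IsBalanced (H : Finset (V × V)) : Prop := ∀ w, outDeg H w = inDeg H w

variable {A H H₁ H₂ : Finset (V × V)} {w : V}

lemma isBalanced_iff : IsBalanced H ↔ ∀ w, #{p ∈ H | p.1 = w} = #{p ∈ H | p.2 = w} := Iff.rfl

lemma outDeg_union (hd : Disjoint H₁ H₂) (w : V) :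
    outDeg (H₁ ∪ H₂) w = outDeg H₁ w + outDeg H₂ w := by
  rw [outDeg, filter_union, card_union_of_disjoint (disjoint_filter_filter hd)]; rfl

lemma inDeg_union (hd : Disjoint H₁ H₂) (w : V) :
    inDeg (H₁ ∪ H₂) w = inDeg H₁ w + inDeg H₂ w := by
  rw [inDeg, filter_union, card_union_of_disjoint (disjoint_filter_filter hd)]; rfl

lemma outDeg_eq_zero_of_forall_fst_ne (hH : H ⊆ A) (hw : ∀ p ∈ A, p.1 ≠ w) :
    outDeg H w = 0 := by
  simpa [outDeg, filter_eq_empty_iff] using fun p hp => hw p (hH hp)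

lemma inDeg_eq_zero_of_forall_snd_ne (hH : H ⊆ A) (hw : ∀ p ∈ A, p.2 ≠ w) :
    inDeg H w = 0 := by
  simpa [inDeg, filter_eq_empty_iff] using fun p hp => hw p (hH hp)

lemma isBalanced_union_iff (hd : Disjoint H₁ H₂) (h₂ : IsBalanced H₂) :
    IsBalanced (H₁ ∪ H₂) ↔ IsBalanced H₁ := by
  refine forall_congr' fun w => ?_
  rw [outDeg_union hd, inDeg_union hd, h₂ w, Nat.add_right_cancel_iff]

variable [Fintype V]

instance (H : Finset (V × V)) : Decidable (IsBalanced H) :=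
  Fintype.decidableForallFintype

lemma sum_outDeg (H : Finset (V × V)) : ∑ w, outDeg H w = #H :=
  (card_eq_sum_card_fiberwise fun _ _ => mem_univ _).symm

lemma sum_inDeg (H : Finset (V × V)) : ∑ w, inDeg H w = #H :=
  (card_eq_sum_card_fiberwise fun _ _ => mem_univ _).symm

lemma isBalanced_of_outDeg_le (h : ∀ w, outDeg H w ≤ inDeg H w) : IsBalanced H :=
  fun w => (sum_eq_sum_iff_of_le fun w _ => h w).1 (by rw [sum_outDeg, sum_inDeg]) w (mem_univ w)

def eulerSign (H : Finset (V × V)) : ℤ := if IsBalanced H then (-1) ^ #H else 0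

lemma card_EE_sub_card_OE (A : Finset (V × V)) :
    (#(EE A) : ℤ) - #(OE A) = ∑ H ∈ A.powerset, eulerSign H := by
  rw [EE, OE, card_filter, card_filter]
  push_cast
  rw [← sum_sub_distrib]
  refine sum_congr rfl fun H _ => ?_
  simp only [← isBalanced_iff, eulerSign]
  by_cases hb : IsBalanced H
  · rcases Nat.even_or_odd #H with he | ho
    · simp [hb, he, he.neg_one_pow, Nat.not_odd_iff_even.2 he]
    · simp [hb, ho, ho.neg_one_pow, Nat.not_even_iff_odd.2 ho]
  · simp [hb]

end ArcSets

section Separation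

variable {V : Type*} [DecidableEq V] [Fintype V] {A₁ A₂ H₁ H₂ : Finset (V × V)} {u v : V}

lemma isBalanced_right_of_isBalanced_union (hH₁ : H₁ ⊆ A₁) (hH₂ : H₂ ⊆ A₂)
    (hd : Disjoint H₁ H₂)
    (hsep : ∀ w : V, (∃ p ∈ A₁, p.1 = w ∨ p.2 = w) → (∃ q ∈ A₂, q.1 = w ∨ q.2 = w) →
      w = u ∨ w = v)
    (htail : ∀ q ∈ A₂, q.1 ≠ u ∧ q.1 ≠ v) (h : IsBalanced (H₁ ∪ H₂)) : IsBalanced H₂ := by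
  refine isBalanced_of_outDeg_le fun w => ?_
  by_cases hw₂ : ∃ q ∈ A₂, q.1 = w ∨ q.2 = w
  swap
  · push Not at hw₂
    simp [outDeg_eq_zero_of_forall_fst_ne hH₂ fun q hq => (hw₂ q hq).1]
  by_cases hw₁ : ∃ p ∈ A₁, p.1 = w ∨ p.2 = w
  · have hout : outDeg H₂ w = 0 := outDeg_eq_zero_of_forall_fst_ne hH₂ fun q hq => by
      rcases hsep w hw₁ hw₂ with rfl | rfl
      exacts [(htail q hq).1, (htail q hq).2]
    simp [hout]
  · push Not at hw₁
    have hbal := h w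
    rw [outDeg_union hd, inDeg_union hd,
      outDeg_eq_zero_of_forall_fst_ne hH₁ fun p hp => (hw₁ p hp).1,
      inDeg_eq_zero_of_forall_snd_ne hH₁ fun p hp => (hw₁ p hp).2] at hbal
    omega

lemma eulerSign_union (hH₁ : H₁ ⊆ A₁) (hH₂ : H₂ ⊆ A₂) (hdisj : Disjoint A₁ A₂)
    (hsep : ∀ w : V, (∃ p ∈ A₁, p.1 = w ∨ p.2 = w) → (∃ q ∈ A₂, q.1 = w ∨ q.2 = w) →
      w = u ∨ w = v)
    (htail : ∀ q ∈ A₂, q.1 ≠ u ∧ q.1 ≠ v) :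
    eulerSign (H₁ ∪ H₂) = eulerSign H₁ * eulerSign H₂ := by
  have hd : Disjoint H₁ H₂ := hdisj.mono hH₁ hH₂
  have hbal : IsBalanced (H₁ ∪ H₂) ↔ IsBalanced H₁ ∧ IsBalanced H₂ :=
    ⟨fun h => have h₂ := isBalanced_right_of_isBalanced_union hH₁ hH₂ hd hsep htail h
      ⟨(isBalanced_union_iff hd h₂).1 h, h₂⟩,
     fun h => (isBalanced_union_iff hd h.2).2 h.1⟩
  unfold eulerSign
  by_cases h₁ : IsBalanced H₁ <;> by_cases h₂ : IsBalanced H₂ <;>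
    simp [hbal, h₁, h₂, card_union_of_disjoint hd, pow_add]

end Separation

/-- Let the arc set of a digraph `D` be partitioned into `A1` and `A2` so that the only
vertices incident both with an arc of `A1` and an arc of `A2` are `u` and `v`, and no
arc of `A2` has tail `u` or `v`.  Then
`|EE(D)| − |OE(D)| = (|EE(D1)| − |OE(D1)|) · (|EE(D2)| − |OE(D2)|)`,
where `D1` and `D2` are the spanning sub-digraphs with arc sets `A1` and `A2`. -/
theorem statement12 {V : Type*} [DecidableEq V] [Fintype V]
    (A1 A2 : Finset (V × V)) (u v : V)
    (hdisj : Disjoint A1 A2)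
    (hsep : ∀ w : V, (∃ p ∈ A1, p.1 = w ∨ p.2 = w) → (∃ q ∈ A2, q.1 = w ∨ q.2 = w) →
      w = u ∨ w = v)
    (htail : ∀ q ∈ A2, q.1 ≠ u ∧ q.1 ≠ v) :
    ((EE (A1 ∪ A2)).card : ℤ) - ((OE (A1 ∪ A2)).card : ℤ) =
      (((EE A1).card : ℤ) - ((OE A1).card : ℤ)) *
        (((EE A2).card : ℤ) - ((OE A2).card : ℤ)) := by
  rw [card_EE_sub_card_OE, card_EE_sub_card_OE, card_EE_sub_card_OE, sum_powerset_union hdisj,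
    sum_mul_sum]
  exact sum_congr rfl fun H₁ h₁ => sum_congr rfl fun H₂ h₂ =>
    eulerSign_union (mem_powerset.1 h₁) (mem_powerset.1 h₂) hdisj hsep htail
end
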